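/- Let J_TH,U = (1/2)·((n+1)/n)·(1 − R_n/R_0)·J_max. Suppose J_ave satisfies J_TH,U ≤ J_ave ≤ ((n+1)/(2n))·J_max, and define the semi-uniform jammer strategy ẏ by ẏ_0 = 1 − (2n/(n+1))·(J_ave/J_max) and ẏ_j = (2/(n+1))·(J_ave/J_max) for 1 ≤ j ≤ n. Then ẏ is a mixed strategy with average power Σ_{j=0}^n ẏ_j·J_j = J_ave, and for every transmitter mixed strategy x, xᵀZẏ ≤ R_n. -/

import Mathlib

open Finset

/-- A mixed strategy on `{0, …, n}`: nonnegative entries summing to 1. -/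
def IsMixed (n : ℕ) (x : ℕ → ℝ) : Prop :=
  (∀ i ∈ Finset.range (n + 1), 0 ≤ x i) ∧ ∑ i ∈ Finset.range (n + 1), x i = 1

/-- Expected payoff `xᵀ Z y` for the lower-triangular payoff matrix `Z(i,j) = Zᵢ` if `j ≤ i`,
`0` otherwise. -/
noncomputable def pay (n : ℕ) (Z : ℕ → ℝ) (x y : ℕ → ℝ) : ℝ :=
  ∑ i ∈ Finset.range (n + 1), ∑ j ∈ Finset.range (n + 1),
    x i * (if j ≤ i then Z i else 0) * y j

/-- The average jamming power of the strategy `y`. -/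
noncomputable def avgPow (n : ℕ) (J y : ℕ → ℝ) : ℝ :=
  ∑ j ∈ Finset.range (n + 1), y j * J j

/-- The jammer's feasible set: mixed strategies of average power at most `Jave`. -/
def YLE (n : ℕ) (J : ℕ → ℝ) (Jave : ℝ) (y : ℕ → ℝ) : Prop :=
  IsMixed n y ∧ avgPow n J y ≤ Jave

/-- The critical average jamming power `J_{ave,m} = Z_m ∑_{j=1}^m (Z_j⁻¹ - Z_{j-1}⁻¹) J_j`. -/
noncomputable def JaveM (m : ℕ) (J Z : ℕ → ℝ) : ℝ :=
  Z m * ∑ j ∈ Finset.Icc 1 m, ((Z j)⁻¹ - (Z (j - 1))⁻¹) * J j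

/-! Write `a` for the common value `ẏ_j`, `1 ≤ j ≤ n`. Against `ẏ`, row `i` of `Z` pays
`R_i (1 - (n - i) a)`. The map `s ↦ 1 / log (1 + P / s)` is concave on `(0, ∞)`: its second
derivative has the sign of `2P / (2s + P) - log (1 + P / s) ≤ 0`. Since the noise levels
`N + (i/n) J_max` are equally spaced, `1 / R_i` therefore lies above the chord between `1 / R_0`
and `1 / R_n`. The threshold `J_ave ≥ J_TH,U` says exactly `n a ≥ 1 - R_n / R_0`, and together
with the chord bound this gives `R_i (1 - (n - i) a) ≤ R_n` for every row. -/

open Real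

theorem mul_one_sub_mul_le_of_le_inv {r₀ r₁ r θ b : ℝ} (hr : 0 < r) (hr₁ : 0 < r₁)
    (hθ : θ ≤ 1) (hb : 1 - r₁ / r₀ ≤ b) (h : θ / r₁ + (1 - θ) / r₀ ≤ r⁻¹) :
    r * (1 - (1 - θ) * b) ≤ r₁ := by
  have hθ' : 0 ≤ 1 - θ := by linarith
  calc r * (1 - (1 - θ) * b) ≤ r * (1 - (1 - θ) * (1 - r₁ / r₀)) := by gcongr
    _ = r * r₁ * (θ / r₁ + (1 - θ) / r₀) := by field_simp; ring
    _ ≤ r * r₁ * r⁻¹ := by gcongr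
    _ = r₁ := by field_simp

noncomputable def awgnRate (P s : ℝ) : ℝ := 1 / 2 * log (1 + P / s)

section AwgnRate

variable {P : ℝ}

theorem awgnRate_pos (hP : 0 < P) {s : ℝ} (hs : 0 < s) : 0 < awgnRate P s := by
  have := log_pos (lt_add_of_pos_right 1 (div_pos hP hs))
  unfold awgnRate
  positivity

theorem awgnRate_antitoneOn (hP : 0 ≤ P) : AntitoneOn (awgnRate P) (Set.Ioi 0) :=
  fun s hs t ht hst => by
    rw [Set.mem_Ioi] at hs ht
    unfold awgnRate
    gcongr

theorem hasDerivAt_awgnRate (hP : 0 < P) {s : ℝ} (hs : 0 < s) :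
    HasDerivAt (awgnRate P) (-(P / (2 * s * (s + P)))) s := by
  have h := ((((hasDerivAt_inv hs.ne').const_mul P).const_add 1).log
    (by positivity)).const_mul (1 / 2 : ℝ)
  refine (h.congr_deriv ?_ : HasDerivAt (fun s => 1 / 2 * log (1 + P * s⁻¹)) _ s)
  field_simp

theorem le_two_mul_add_mul_awgnRate (hP : 0 < P) {s : ℝ} (hs : 0 < s) :
    P ≤ (2 * s + P) * awgnRate P s := by
  have h := le_log_one_add_of_nonneg (div_pos hP hs).le
  rw [show 2 * (P / s) / (P / s + 2) = 2 * P / (2 * s + P) by field_simp; ring,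
    div_le_iff₀ (by positivity)] at h
  unfold awgnRate
  linarith

theorem concaveOn_inv_awgnRate (hP : 0 < P) :
    ConcaveOn ℝ (Set.Ioi 0) fun s => (awgnRate P s)⁻¹ := by
  have hR := fun s (hs : 0 < s) => awgnRate_pos hP hs
  have hf' : ∀ s : ℝ, 0 < s →
      HasDerivAt (fun s => (awgnRate P s)⁻¹) (P / (2 * s * (s + P) * awgnRate P s ^ 2)) s :=
    fun s hs => ((hasDerivAt_awgnRate hP hs).fun_inv (hR s hs).ne').congr_deriv (by field_simp)
  have hf'' : ∀ s : ℝ, 0 < s → HasDerivAt (fun s => P / (2 * s * (s + P) * awgnRate P s ^ 2))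
      (P * (P - (2 * s + P) * awgnRate P s) / (2 * s ^ 2 * (s + P) ^ 2 * awgnRate P s ^ 3)) s := by
    intro s hs
    have hD := (((hasDerivAt_id' s).const_mul 2).fun_mul
      ((hasDerivAt_id' s).add_const P)).fun_mul ((hasDerivAt_awgnRate hP hs).fun_pow 2)
    refine ((hasDerivAt_const s P).fun_div hD (by have := hR s hs; positivity)).congr_deriv ?_
    have := (hR s hs).ne'
    field_simp
    ring
  refine concaveOn_of_hasDerivWithinAt2_nonpos (convex_Ioi 0)
    (fun s hs => (hf' s hs).continuousAt.continuousWithinAt)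
    (fun s hs => (hf' s (by simpa using hs)).hasDerivWithinAt)
    (fun s hs => (hf'' s (by simpa using hs)).hasDerivWithinAt) fun s hs => ?_
  rw [interior_Ioi, Set.mem_Ioi] at hs
  have := hR s hs
  have := le_two_mul_add_mul_awgnRate hP hs
  exact div_nonpos_of_nonpos_of_nonneg (by nlinarith) (by positivity)

theorem awgnRate_mul_one_sub_mul_le (hP : 0 < P) {s₀ s₁ θ b : ℝ}
    (hs₀ : 0 < s₀) (hs₁ : 0 < s₁)
    (hθ₀ : 0 ≤ θ) (hθ₁ : θ ≤ 1) (hb : 1 - awgnRate P s₁ / awgnRate P s₀ ≤ b) :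
    awgnRate P ((1 - θ) * s₀ + θ * s₁) * (1 - (1 - θ) * b) ≤ awgnRate P s₁ := by
  have hconc := (concaveOn_inv_awgnRate hP).2 hs₀ hs₁ (sub_nonneg.2 hθ₁) hθ₀ (by ring)
  simp only [smul_eq_mul] at hconc
  refine mul_one_sub_mul_le_of_le_inv (awgnRate_pos hP ?_) (awgnRate_pos hP hs₁) hθ₁ hb ?_
  · simpa only [smul_eq_mul, Set.mem_Ioi] using
      convex_Ioi (0 : ℝ) hs₀ hs₁ (sub_nonneg.2 hθ₁) hθ₀ (by ring)
  · simpa only [div_eq_mul_inv, add_comm] using hconc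

end AwgnRate

section SemiUniform

def semiUniform (n : ℕ) (a : ℝ) (j : ℕ) : ℝ :=
  if j = 0 then 1 - n * a else if j ≤ n then a else 0

variable {n : ℕ} {a : ℝ}

theorem sum_range_succ_semiUniform {i : ℕ} (hi : i ≤ n) :
    ∑ j ∈ range (i + 1), semiUniform n a j = 1 - (n - i) * a := by
  have hconst : ∀ j ∈ range i, semiUniform n a (j + 1) = a := fun j hj => by
    simp only [semiUniform, Nat.succ_ne_zero, if_false]
    rw [if_pos (by have := mem_range.1 hj; omega)]
  rw [sum_range_succ', sum_congr rfl hconst, sum_const, card_range, nsmul_eq_mul]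
  simp only [semiUniform, if_true]
  ring

theorem isMixed_semiUniform (ha : 0 ≤ a) (hna : n * a ≤ 1) : IsMixed n (semiUniform n a) := by
  refine ⟨fun j _ => ?_, ?_⟩
  · unfold semiUniform
    split_ifs <;> linarith
  · rw [sum_range_succ_semiUniform le_rfl, sub_self, zero_mul, sub_zero]

theorem avgPow_semiUniform (hn : n ≠ 0) (c : ℝ) :
    avgPow n (fun j => j / n * c) (semiUniform n a) = (n + 1) / 2 * a * c := by
  have hterm : ∀ j ∈ range (n + 1), semiUniform n a j * (j / n * c) = a * c / n * j :=
    fun j hj => by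
      unfold semiUniform
      split_ifs with h0 hjn
      · simp [h0]
      · ring
      · exact absurd (mem_range.1 hj) (by omega)
  have hgauss : (∑ j ∈ range (n + 1), (j : ℝ)) * 2 = ((n : ℝ) + 1) * n := by
    have := sum_range_id_mul_two (n + 1)
    rw [Nat.add_sub_cancel] at this
    rw [← Nat.cast_sum]
    exact_mod_cast this
  rw [avgPow, sum_congr rfl hterm, ← mul_sum]
  field_simp
  linear_combination a * c * hgauss

end SemiUniform

theorem pay_eq_sum_mul_sum_range (n : ℕ) (Z x y : ℕ → ℝ) :
    pay n Z x y = ∑ i ∈ range (n + 1), x i * (Z i * ∑ j ∈ range (i + 1), y j) := by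
  refine sum_congr rfl fun i hi => ?_
  have hsub : range (n + 1) ∩ range (i + 1) = range (i + 1) := by
    rw [range_inter_range, min_eq_right (by have := mem_range.1 hi; omega)]
  rw [mul_sum, mul_sum, ← hsub, ← sum_ite_mem]
  refine sum_congr rfl fun j _ => ?_
  simp only [Finset.mem_range, Nat.lt_succ_iff]
  split_ifs <;> ring

theorem pay_le_of_forall_le {n : ℕ} {Z x y : ℕ → ℝ} {v : ℝ} (hx : IsMixed n x)
    (h : ∀ i ≤ n, Z i * ∑ j ∈ range (i + 1), y j ≤ v) : pay n Z x y ≤ v := by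
  calc pay n Z x y = ∑ i ∈ range (n + 1), x i * (Z i * ∑ j ∈ range (i + 1), y j) :=
        pay_eq_sum_mul_sum_range n Z x y
    _ ≤ ∑ i ∈ range (n + 1), x i * v :=
        sum_le_sum fun i hi => mul_le_mul_of_nonneg_left (h i (by
          have := mem_range.1 hi; omega)) (hx.1 i hi)
    _ = v := by rw [← sum_mul, hx.2, one_mul]

/-- with AWGN rates `R_i = (1/2) ln(1 + P/(N + (i/n) J_max))`, equally spaced
jamming powers, and `J_TH,U ≤ J_ave ≤ ((n+1)/(2n)) J_max`, the semi-uniform jammer strategy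
`ẏ` is a mixed strategy with average power exactly `J_ave` forcing payoff at most `R_n`. -/
theorem stmt_14 (n : ℕ) (hn : 1 ≤ n) (P N Jmax : ℝ)
    (hP : 0 < P) (hN : 0 < N) (hJmax : 0 < Jmax)
    (J R : ℕ → ℝ)
    (hJ : ∀ j, J j = (j : ℝ) / n * Jmax)
    (hR : ∀ i, R i = 1 / 2 * Real.log (1 + P / (N + (i : ℝ) / n * Jmax)))
    (JTHU Jave : ℝ)
    (hU : JTHU = 1 / 2 * (((n : ℝ) + 1) / n) * (1 - R n / R 0) * Jmax)
    (hJave1 : JTHU ≤ Jave) (hJave2 : Jave ≤ ((n : ℝ) + 1) / (2 * n) * Jmax)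
    (ydot : ℕ → ℝ)
    (hy : ∀ j, ydot j = if j = 0 then 1 - 2 * (n : ℝ) / ((n : ℝ) + 1) * (Jave / Jmax)
      else if j ≤ n then 2 / ((n : ℝ) + 1) * (Jave / Jmax) else 0) :
    IsMixed n ydot ∧
    avgPow n J ydot = Jave ∧
    (∀ x : ℕ → ℝ, IsMixed n x → pay n R x ydot ≤ R n) := by
  have hn0 : (0 : ℝ) < n := by exact_mod_cast hn
  set a := 2 / ((n : ℝ) + 1) * (Jave / Jmax) with ha_def
  have hydot : ydot = semiUniform n a := funext fun j => by
    rw [hy, semiUniform]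
    split_ifs <;> ring
  have hRs : ∀ i : ℕ, R i = awgnRate P ((1 - i / n) * N + i / n * (N + Jmax)) := fun i => by
    rw [hR, awgnRate]; ring_nf
  have hRn : R n = awgnRate P (N + Jmax) := by rw [hRs, div_self hn0.ne']; ring_nf
  have hR0 : R 0 = awgnRate P N := by rw [hRs]; simp
  have hscale : (n : ℝ) * a = 2 * n / ((n + 1) * Jmax) * Jave := by rw [ha_def]; field_simp
  have hthr : 1 - R n / R 0 ≤ n * a :=
    calc 1 - R n / R 0 = 2 * n / ((n + 1) * Jmax) * JTHU := by
          rw [hU]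
          field_simp
      _ ≤ 2 * n / ((n + 1) * Jmax) * Jave := by gcongr
      _ = n * a := hscale.symm
  have hna : n * a ≤ 1 :=
    calc (n : ℝ) * a = 2 * n / ((n + 1) * Jmax) * Jave := hscale
      _ ≤ 2 * n / ((n + 1) * Jmax) * ((n + 1) / (2 * n) * Jmax) := by gcongr
      _ = 1 := by field_simp
  have ha : 0 ≤ a := by
    have hRn0 : R n ≤ R 0 := by
      rw [hRn, hR0]
      exact awgnRate_antitoneOn hP.le hN (by simp only [Set.mem_Ioi]; positivity) (by linarith)
    have := div_le_one_of_le₀ hRn0 (hR0 ▸ (awgnRate_pos hP hN).le)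
    nlinarith
  refine ⟨hydot ▸ isMixed_semiUniform ha hna, ?_,
    fun x hx => pay_le_of_forall_le hx fun i hi => ?_⟩
  · rw [hydot, show J = fun j : ℕ => (j : ℝ) / n * Jmax from funext hJ,
      avgPow_semiUniform (by omega), ha_def]
    field_simp
  · have hθ : (i : ℝ) / n ≤ 1 := div_le_one_of_le₀ (by exact_mod_cast hi) hn0.le
    rw [hydot, sum_range_succ_semiUniform hi, hRs, hRn,
      show ((n : ℝ) - i) * a = (1 - i / n) * (n * a) by field_simp]
    refine awgnRate_mul_one_sub_mul_le hP hN (by linarith) (by positivity) hθ ?_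
    rwa [← hRn, ← hR0]
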